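/- arXiv:2107.11465 — 3 statements merged into one kernel-verified Lean document; each statement's English description precedes it below -/
import Mathlib

section
/- Let β ∈ D(φ). For any integers M, N with M ≤ N, the identity D(μ_{β,M} ‖ μ_{β,N}) = log W_{β,N} − log W_{β,M} − Σ_{|u|=M} μ_{β,M}(u) · log W^u_{β,N−M} holds pointwise on the underlying probability space, where the Kullback–Leibler divergence is taken over ∂T_M (with μ_{β,N} restricted to depth M). -/
open MeasureTheory ProbabilityTheory Real Filter
open scoped ENNReal NNReal

noncomputable section

variable {Ω : Type*} [MeasurableSpace Ω]

/-- Position of the particle at vertex `v` in the branching random walk with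
increment vectors `Yv`. -/
def brwX (d : ℕ) (Yv : List (Fin d) → Ω → Fin d → ℝ) (v : List (Fin d)) (ω : Ω) : ℝ :=
  ∑ k : Fin v.length, Yv (v.take k) ω (v.get k)

/-- `E[∑ i, e^{β Y_i}]` as an extended nonneg real. -/
def brwPhiTop (d : ℕ) (Yv : List (Fin d) → Ω → Fin d → ℝ) (P : Measure Ω) (β : ℝ) : ℝ≥0∞ :=
  ∫⁻ ω, ∑ i : Fin d, ENNReal.ofReal (Real.exp (β * Yv [] ω i)) ∂P

/-- The domain `D(φ) = {β : φ(β) < ∞}`. -/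
def brwDom (d : ℕ) (Yv : List (Fin d) → Ω → Fin d → ℝ) (P : Measure Ω) : Set ℝ :=
  {β | brwPhiTop d Yv P β ≠ ⊤}

/-- `φ(β) = log E[∑ i, e^{β Y_i}]` (as a real number; meaningful on `D(φ)`). -/
def brwPhi (d : ℕ) (Yv : List (Fin d) → Ω → Fin d → ℝ) (P : Measure Ω) (β : ℝ) : ℝ :=
  Real.log (brwPhiTop d Yv P β).toReal

/-- Critical inverse temperature `β_c ∈ (0,∞]`, as an extended real. -/
def brwBetaC (d : ℕ) (Yv : List (Fin d) → Ω → Fin d → ℝ) (P : Measure Ω) : EReal :=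
  sSup ((fun β : ℝ => (β : EReal)) ''
    {β | β ∈ interior (brwDom d Yv P) ∧
      β * deriv (brwPhi d Yv P) β < brwPhi d Yv P β})

/-- Normalized partition function `W_{β,n}`. -/
def brwW (d : ℕ) (Yv : List (Fin d) → Ω → Fin d → ℝ) (P : Measure Ω) (β : ℝ) (n : ℕ)
    (ω : Ω) : ℝ :=
  ∑ v : Fin n → Fin d,
    Real.exp (β * brwX d Yv (List.ofFn v) ω - brwPhi d Yv P β * n)

/-- Normalized partition function `W^u_{β,n}` of the subtree rooted at `u`. -/
def brwWsub (d : ℕ) (Yv : List (Fin d) → Ω → Fin d → ℝ) (P : Measure Ω) (u : List (Fin d))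
    (β : ℝ) (n : ℕ) (ω : Ω) : ℝ :=
  ∑ w : Fin n → Fin d,
    Real.exp (β * (brwX d Yv (u ++ List.ofFn w) ω - brwX d Yv u ω) - brwPhi d Yv P β * n)

/-- Gibbs measure `μ_{β,n}(u)` (for `u` of depth `≤ n`). -/
def brwGibbs (d : ℕ) (Yv : List (Fin d) → Ω → Fin d → ℝ) (P : Measure Ω) (β : ℝ) (n : ℕ)
    (u : List (Fin d)) (ω : Ω) : ℝ :=
  Real.exp (β * brwX d Yv u ω - brwPhi d Yv P β * u.length) *
    brwWsub d Yv P u β (n - u.length) ω / brwW d Yv P β n ω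

/-- Gibbs measure `μ^v_{β,n}(u)` of the subtree rooted at `v`. -/
def brwGibbsRel (d : ℕ) (Yv : List (Fin d) → Ω → Fin d → ℝ) (P : Measure Ω) (β : ℝ) (n : ℕ)
    (v u : List (Fin d)) (ω : Ω) : ℝ :=
  Real.exp (β * (brwX d Yv (v ++ u) ω - brwX d Yv v ω) - brwPhi d Yv P β * u.length) *
    brwWsub d Yv P (v ++ u) β (n - u.length) ω / brwWsub d Yv P v β n ω

/-- The renormalized ("algorithmic") measure `μ_{β,M,N}`, given by the unrolled recursion
`μ_{β,M,N}(u) = ∏_K μ^{u|_{KM}}_{β, M ∧ (N-KM)}(block K of u)`. -/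
def brwRen (d : ℕ) (Yv : List (Fin d) → Ω → Fin d → ℝ) (P : Measure Ω) (β : ℝ) (M N : ℕ)
    (u : List (Fin d)) (ω : Ω) : ℝ :=
  ∏ K ∈ Finset.range ((N + M - 1) / M),
    brwGibbsRel d Yv P β (min M (N - K * M)) (u.take (K * M)) ((u.drop (K * M)).take M) ω

/-- Kullback–Leibler divergence between mass functions `p` and `q` on `∂T_n`. -/
def brwKL (d n : ℕ) (p q : List (Fin d) → ℝ) : ℝ :=
  ∑ u : Fin n → Fin d, p (List.ofFn u) * Real.log (p (List.ofFn u) / q (List.ofFn u))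

/-- Entropy of a mass function `q` on `∂T_n`. -/
def brwEnt (d n : ℕ) (q : List (Fin d) → ℝ) : ℝ :=
  ∑ u : Fin n → Fin d, q (List.ofFn u) * Real.log (1 / q (List.ofFn u))

end

/-- the KL divergence between two Gibbs measures in terms of the
logarithms of the partition functions. -/
theorem stmt_7
    {Ω : Type*} [MeasurableSpace Ω]
    (d : ℕ) (hd : 2 ≤ d)
    (Yv : List (Fin d) → Ω → Fin d → ℝ)
    (P : Measure Ω) [IsProbabilityMeasure P]
    (hmeas : ∀ v, Measurable (Yv v))
    (hindep : iIndepFun Yv P)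
    (hident : ∀ v, IdentDistrib (Yv v) (Yv []) P P)
    (β : ℝ) (hβ : β ∈ brwDom d Yv P)
    (M N : ℕ) (hMN : M ≤ N) :
    ∀ ω : Ω,
      brwKL d M (fun u => brwGibbs d Yv P β M u ω) (fun u => brwGibbs d Yv P β N u ω)
      = Real.log (brwW d Yv P β N ω) - Real.log (brwW d Yv P β M ω)
        - ∑ u : Fin M → Fin d, brwGibbs d Yv P β M (List.ofFn u) ω *
            Real.log (brwWsub d Yv P (List.ofFn u) β (N - M) ω) := by
  intro ω
  have hdpos : 0 < d := by omega
  have hne : Nonempty (Fin d) := ⟨⟨0, hdpos⟩⟩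
  have hWpos : ∀ n, 0 < brwW d Yv P β n ω := fun n =>
    Finset.sum_pos (fun v _ => Real.exp_pos _) Finset.univ_nonempty
  have hWsubpos : ∀ u n, 0 < brwWsub d Yv P u β n ω := fun u n =>
    Finset.sum_pos (fun v _ => Real.exp_pos _) Finset.univ_nonempty
  have hWsub0 : ∀ u : List (Fin d), brwWsub d Yv P u β 0 ω = 1 := by
    intro u
    simp [brwWsub]
  set φ := brwPhi d Yv P β with hφ
  have hp : ∀ u : Fin M → Fin d, brwGibbs d Yv P β M (List.ofFn u) ω
      = Real.exp (β * brwX d Yv (List.ofFn u) ω - φ * M) / brwW d Yv P β M ω := by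
    intro u
    simp [brwGibbs, List.length_ofFn, hWsub0]
    rfl
  have hq : ∀ u : Fin M → Fin d, brwGibbs d Yv P β N (List.ofFn u) ω
      = Real.exp (β * brwX d Yv (List.ofFn u) ω - φ * M) *
        brwWsub d Yv P (List.ofFn u) β (N - M) ω / brwW d Yv P β N ω := by
    intro u
    simp [brwGibbs, List.length_ofFn]
    rfl
  have hWMdef : brwW d Yv P β M ω
      = ∑ u : Fin M → Fin d, Real.exp (β * brwX d Yv (List.ofFn u) ω - φ * M) := rfl
  have hsum : ∑ u : Fin M → Fin d, brwGibbs d Yv P β M (List.ofFn u) ω = 1 := by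
    rw [Finset.sum_congr rfl (fun u _ => hp u), ← Finset.sum_div, ← hWMdef]
    exact div_self (hWpos M).ne'
  have hlog : ∀ u : Fin M → Fin d,
      Real.log (brwGibbs d Yv P β M (List.ofFn u) ω / brwGibbs d Yv P β N (List.ofFn u) ω)
      = Real.log (brwW d Yv P β N ω) - Real.log (brwW d Yv P β M ω)
        - Real.log (brwWsub d Yv P (List.ofFn u) β (N - M) ω) := by
    intro u
    rw [hp u, hq u]
    have h1 : (0:ℝ) < Real.exp (β * brwX d Yv (List.ofFn u) ω - φ * M) := Real.exp_pos _
    have h2 := hWpos M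
    have h3 := hWpos N
    have h4 := hWsubpos (List.ofFn u) (N - M)
    rw [show Real.exp (β * brwX d Yv (List.ofFn u) ω - φ * M) / brwW d Yv P β M ω /
        (Real.exp (β * brwX d Yv (List.ofFn u) ω - φ * M) *
          brwWsub d Yv P (List.ofFn u) β (N - M) ω / brwW d Yv P β N ω)
        = brwW d Yv P β N ω / (brwW d Yv P β M ω * brwWsub d Yv P (List.ofFn u) β (N - M) ω)
        from by field_simp]
    rw [Real.log_div h3.ne' (by positivity), Real.log_mul h2.ne' h4.ne']
    ring
  unfold brwKL
  calc (∑ u : Fin M → Fin d, brwGibbs d Yv P β M (List.ofFn u) ω *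
        Real.log (brwGibbs d Yv P β M (List.ofFn u) ω / brwGibbs d Yv P β N (List.ofFn u) ω))
      = ∑ u : Fin M → Fin d, brwGibbs d Yv P β M (List.ofFn u) ω *
          (Real.log (brwW d Yv P β N ω) - Real.log (brwW d Yv P β M ω)
            - Real.log (brwWsub d Yv P (List.ofFn u) β (N - M) ω)) := by
        exact Finset.sum_congr rfl (fun u _ => by rw [hlog u])
    _ = (∑ u : Fin M → Fin d, brwGibbs d Yv P β M (List.ofFn u) ω) *
          (Real.log (brwW d Yv P β N ω) - Real.log (brwW d Yv P β M ω))
        - ∑ u : Fin M → Fin d, brwGibbs d Yv P β M (List.ofFn u) ω *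
            Real.log (brwWsub d Yv P (List.ofFn u) β (N - M) ω) := by
        rw [Finset.sum_mul, ← Finset.sum_sub_distrib]
        exact Finset.sum_congr rfl (fun u _ => by ring)
    _ = _ := by rw [hsum]; ring
end

section
/- Let β ∈ [0, β_c) and let p ∈ (1,2] be such that pβ ∈ D(φ) and φ(pβ) < p·φ(β). Then for every integer M ≥ 1, E[Σ_{|u|=M} μ_{β,M}(u)^p] ≤ P(W_{β,M} < 1/2) + 2^p · e^{(φ(pβ) − p·φ(β))M}. -/
open MeasureTheory ProbabilityTheory Real Filter
open scoped ENNReal NNReal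

noncomputable section
namespace BrwAux
variable {Ω : Type*} [MeasurableSpace Ω]

lemma brwX_meas (d : ℕ) (Yv : List (Fin d) → Ω → Fin d → ℝ) (hmeas : ∀ v, Measurable (Yv v))
    (v : List (Fin d)) : Measurable (brwX d Yv v) := by
  unfold brwX
  exact Finset.measurable_sum _ fun k _ => (measurable_pi_apply _).comp (hmeas _)

lemma brw_root_int (d : ℕ) (Yv : List (Fin d) → Ω → Fin d → ℝ) (P : Measure Ω)
    (hmeas : ∀ v, Measurable (Yv v)) {γ : ℝ} (hγ : γ ∈ brwDom d Yv P) :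
    (∀ i : Fin d, Integrable (fun ω => Real.exp (γ * Yv [] ω i)) P) ∧
      ∑ i : Fin d, ∫ ω, Real.exp (γ * Yv [] ω i) ∂P = (brwPhiTop d Yv P γ).toReal := by
  have hm : ∀ i : Fin d, Measurable fun ω => Real.exp (γ * Yv [] ω i) := fun i =>
    (((measurable_pi_apply i).comp (hmeas [])).const_mul γ).exp
  have hle : ∀ i : Fin d,
      ∫⁻ ω, ENNReal.ofReal (Real.exp (γ * Yv [] ω i)) ∂P ≤ brwPhiTop d Yv P γ := fun i =>
    lintegral_mono fun ω =>
      Finset.single_le_sum (f := fun j => ENNReal.ofReal (Real.exp (γ * Yv [] ω j)))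
        (fun _ _ => by positivity) (Finset.mem_univ i)
  have hfin : ∀ i : Fin d,
      ∫⁻ ω, ENNReal.ofReal (Real.exp (γ * Yv [] ω i)) ∂P ≠ ⊤ := fun i =>
    ne_top_of_le_ne_top hγ (hle i)
  have hint : ∀ i : Fin d, Integrable (fun ω => Real.exp (γ * Yv [] ω i)) P := by
    intro i
    refine ⟨(hm i).aestronglyMeasurable, ?_⟩
    rw [hasFiniteIntegral_iff_ofReal (ae_of_all _ fun ω => (Real.exp_pos _).le)]
    exact (hfin i).lt_top
  refine ⟨hint, ?_⟩
  have heq : ∀ i : Fin d, ∫ ω, Real.exp (γ * Yv [] ω i) ∂P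
      = (∫⁻ ω, ENNReal.ofReal (Real.exp (γ * Yv [] ω i)) ∂P).toReal := fun i =>
    integral_eq_lintegral_of_nonneg_ae (ae_of_all _ fun ω => (Real.exp_pos _).le)
      (hm i).aestronglyMeasurable
  simp_rw [heq]
  rw [← ENNReal.toReal_sum (fun i _ => hfin i)]
  congr 1
  rw [brwPhiTop, lintegral_finset_sum]
  exact fun i _ => (hm i).ennreal_ofReal

lemma brw_path (d : ℕ) (Yv : List (Fin d) → Ω → Fin d → ℝ) (P : Measure Ω)
    [IsProbabilityMeasure P]
    (hmeas : ∀ v, Measurable (Yv v))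
    (hindep : iIndepFun Yv P)
    (hident : ∀ v, IdentDistrib (Yv v) (Yv []) P P)
    (γ : ℝ) (hroot : ∀ i : Fin d, Integrable (fun ω => Real.exp (γ * Yv [] ω i)) P)
    (M : ℕ) (u : Fin M → Fin d) :
    Integrable (fun ω => Real.exp (γ * brwX d Yv (List.ofFn u) ω)) P ∧
    ∫ ω, Real.exp (γ * brwX d Yv (List.ofFn u) ω) ∂P
      = ∏ k : Fin M, ∫ ω, Real.exp (γ * Yv [] ω (u k)) ∂P := by
  classical
  set Z : List (Fin d) → Ω → ℝ :=
    fun v ω => if h : v.length < M then Yv v ω (u ⟨v.length, h⟩) else 0 with hZ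
  have hZmeas : ∀ v, Measurable (Z v) := by
    intro v; rw [hZ]; dsimp only; split
    · exact (measurable_pi_apply _).comp (hmeas v)
    · exact measurable_const
  have hZindep : iIndepFun Z P := by
    refine hindep.comp
      (g := fun v (x : Fin d → ℝ) => if h : v.length < M then x (u ⟨v.length, h⟩) else 0) ?_
    intro v; split
    · exact measurable_pi_apply _
    · exact measurable_const
  set s : Finset (List (Fin d)) :=
    Finset.image (fun k : Fin M => (List.ofFn u).take (k : ℕ)) Finset.univ with hs
  have hlen : ∀ k : Fin M, ((List.ofFn u).take (k : ℕ)).length = (k : ℕ) := by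
    intro k
    have := k.2
    rw [List.length_take, List.length_ofFn]
    omega
  have hinj : ∀ a ∈ Finset.univ, ∀ b ∈ Finset.univ,
      (fun k : Fin M => (List.ofFn u).take (k : ℕ)) a
        = (fun k : Fin M => (List.ofFn u).take (k : ℕ)) b → a = b := by
    intro a _ b _ hab
    have h := congrArg List.length hab
    rw [hlen a, hlen b] at h
    exact Fin.ext h
  have hZval : ∀ (k : Fin M) (ω : Ω),
      Z ((List.ofFn u).take (k : ℕ)) ω = Yv ((List.ofFn u).take (k : ℕ)) ω (u k) := by
    intro k ω
    have h1 : ((List.ofFn u).take (k : ℕ)).length < M := by rw [hlen]; exact k.2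
    rw [hZ]; dsimp only
    rw [dif_pos h1]
    congr 1
    exact congrArg u (Fin.ext (hlen k))
  have hsum : ∀ ω : Ω, (∑ v ∈ s, Z v) ω = brwX d Yv (List.ofFn u) ω := by
    intro ω
    rw [Finset.sum_apply, hs, Finset.sum_image hinj, brwX]
    rw [← Fin.sum_congr' (fun j : Fin (List.ofFn u).length =>
      Yv ((List.ofFn u).take (j : ℕ)) ω ((List.ofFn u).get j)) (List.length_ofFn (f := u)).symm]
    refine Finset.sum_congr rfl fun k _ => ?_
    have hget : (List.ofFn u).get (Fin.cast (List.length_ofFn (f := u)).symm k) = u k := by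
      rw [List.get_ofFn]
      exact congrArg u (Fin.ext rfl)
    simp only [Fin.coe_cast, hget, hZval k ω]
  have hid : ∀ k : Fin M, IdentDistrib (fun ω => Real.exp (γ * Z ((List.ofFn u).take (k : ℕ)) ω))
      (fun ω => Real.exp (γ * Yv [] ω (u k))) P P := by
    intro k
    have hφ : Measurable (fun x : Fin d → ℝ => Real.exp (γ * x (u k))) :=
      by fun_prop
    have h2 := (hident ((List.ofFn u).take (k : ℕ))).comp hφ
    have hfun : (fun ω => Real.exp (γ * Z ((List.ofFn u).take (k : ℕ)) ω))
        = (fun x : Fin d → ℝ => Real.exp (γ * x (u k))) ∘ Yv ((List.ofFn u).take (k : ℕ)) := by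
      funext ω
      simp only [Function.comp_apply, hZval k ω]
    rw [hfun]
    exact h2
  have hint : ∀ v ∈ s, Integrable (fun ω => Real.exp (γ * Z v ω)) P := by
    intro v hv
    rw [hs, Finset.mem_image] at hv
    obtain ⟨k, -, rfl⟩ := hv
    exact (hid k).integrable_iff.mpr (hroot (u k))
  constructor
  · have h3 := hZindep.integrable_exp_mul_sum (t := γ) hZmeas hint
    exact h3.congr (ae_of_all _ fun ω => by simp only [hsum ω])
  · have hmgf := hZindep.mgf_sum (t := γ) hZmeas s
    have h1 : ∫ ω, Real.exp (γ * brwX d Yv (List.ofFn u) ω) ∂P = mgf (∑ v ∈ s, Z v) P γ := by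
      rw [mgf]
      exact integral_congr_ae (ae_of_all _ fun ω => by simp only [hsum ω])
    rw [h1, hmgf, hs, Finset.prod_image hinj]
    refine Finset.prod_congr rfl fun k _ => ?_
    rw [mgf]
    exact (hid k).integral_eq

end BrwAux
end

open BrwAux in
/-- moment bound for E[Σ_{|u|=M} μ_{β,M}(u)^p]. -/
theorem stmt_12
    {Ω : Type*} [MeasurableSpace Ω]
    (d : ℕ) (hd : 2 ≤ d)
    (Yv : List (Fin d) → Ω → Fin d → ℝ)
    (P : Measure Ω) [IsProbabilityMeasure P]
    (hmeas : ∀ v, Measurable (Yv v))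
    (hindep : iIndepFun Yv P)
    (hident : ∀ v, IdentDistrib (Yv v) (Yv []) P P)
    (h0 : (0:ℝ) ∈ interior (brwDom d Yv P))
    (β : ℝ) (hβ0 : 0 ≤ β) (hβc : (β : EReal) < brwBetaC d Yv P)
    (p : ℝ) (hp1 : 1 < p) (hp2 : p ≤ 2)
    (hpdom : p * β ∈ brwDom d Yv P)
    (hphi : brwPhi d Yv P (p * β) < p * brwPhi d Yv P β) :
    ∀ M : ℕ, 1 ≤ M →
      ∫ ω, ∑ u : Fin M → Fin d, (brwGibbs d Yv P β M (List.ofFn u) ω) ^ p ∂P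
        ≤ (P {ω | brwW d Yv P β M ω < 1 / 2}).toReal
          + (2 : ℝ) ^ p * Real.exp ((brwPhi d Yv P (p * β) - p * brwPhi d Yv P β) * M) := by
  classical
  intro M hM
  haveI : Nonempty (Fin d) := ⟨⟨0, by omega⟩⟩
  have hp0 : (0:ℝ) < p := lt_trans one_pos hp1
  set q : ℝ := p * β with hq
  set φβ : ℝ := brwPhi d Yv P β with hφβ
  set φq : ℝ := brwPhi d Yv P q with hφq
  obtain ⟨hroot, hrootsum⟩ := brw_root_int d Yv P hmeas hpdom
  have hSpos : 0 < (brwPhiTop d Yv P q).toReal := by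
    rw [← hrootsum]
    have h0lt : 0 < ∫ ω, Real.exp (q * Yv [] ω ⟨0, by omega⟩) ∂P :=
      integral_exp_pos (hroot _)
    refine lt_of_lt_of_le h0lt ?_
    exact Finset.single_le_sum (f := fun i => ∫ ω, Real.exp (q * Yv [] ω i) ∂P)
      (fun i _ => integral_nonneg fun ω => (Real.exp_pos _).le) (Finset.mem_univ _)
  have hSexp : Real.exp φq = (brwPhiTop d Yv P q).toReal := by
    rw [hφq, brwPhi, Real.exp_log hSpos]
  -- integrability and expectation of W_{pβ, M}
  have hWq_term_int : ∀ u : Fin M → Fin d,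
      Integrable (fun ω => Real.exp (q * brwX d Yv (List.ofFn u) ω - φq * M)) P := by
    intro u
    have h := (brw_path d Yv P hmeas hindep hident q hroot M u).1
    simp_rw [Real.exp_sub]
    exact h.div_const _
  have hWq_int : Integrable (fun ω => brwW d Yv P q M ω) P := by
    unfold brwW
    exact integrable_finset_sum _ fun u _ => hWq_term_int u
  have hsum_prod : ∑ u : Fin M → Fin d, ∏ k : Fin M, (∫ ω, Real.exp (q * Yv [] ω (u k)) ∂P)
      = (∑ i : Fin d, ∫ ω, Real.exp (q * Yv [] ω i) ∂P) ^ M := by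
    have h := Finset.prod_univ_sum (fun _ : Fin M => (Finset.univ : Finset (Fin d)))
      (fun _ i => ∫ ω, Real.exp (q * Yv [] ω i) ∂P)
    rw [Fintype.piFinset_univ] at h
    rw [← h, Finset.prod_const, Finset.card_univ, Fintype.card_fin]
  have hEWq : ∫ ω, brwW d Yv P q M ω ∂P = 1 := by
    unfold brwW
    rw [integral_finset_sum _ fun u _ => hWq_term_int u]
    have hterm : ∀ u : Fin M → Fin d,
        ∫ ω, Real.exp (q * brwX d Yv (List.ofFn u) ω - φq * M) ∂P
          = (∏ k : Fin M, ∫ ω, Real.exp (q * Yv [] ω (u k)) ∂P) / Real.exp (φq * M) := by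
      intro u
      simp_rw [Real.exp_sub]
      rw [integral_div, (brw_path d Yv P hmeas hindep hident q hroot M u).2]
    simp_rw [hterm]
    rw [← Finset.sum_div]
    rw [hsum_prod, hrootsum, ← hSexp, mul_comm φq (M:ℝ), Real.exp_nat_mul]
    exact div_self (pow_ne_zero M (Real.exp_pos φq).ne')
  -- normalization facts at β
  have hWsub0 : ∀ (u' : List (Fin d)) (ω : Ω), brwWsub d Yv P u' β 0 ω = 1 := by
    intro u' ω
    rw [brwWsub, Fintype.sum_unique]
    simp [List.ofFn_zero]
  have hWpos : ∀ ω, 0 < brwW d Yv P β M ω := by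
    intro ω
    rw [brwW]
    exact Finset.sum_pos (fun u _ => Real.exp_pos _) Finset.univ_nonempty
  have hGibbs : ∀ (u : Fin M → Fin d) (ω : Ω), brwGibbs d Yv P β M (List.ofFn u) ω
      = Real.exp (β * brwX d Yv (List.ofFn u) ω - φβ * M) / brwW d Yv P β M ω := by
    intro u ω
    rw [brwGibbs, List.length_ofFn, Nat.sub_self, hWsub0, mul_one]
  have hWqnn : ∀ ω, 0 ≤ brwW d Yv P q M ω := by
    intro ω
    rw [brwW]
    exact Finset.sum_nonneg fun u _ => (Real.exp_pos _).le
  have hWmeas : Measurable (fun ω => brwW d Yv P β M ω) := by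
    unfold brwW
    exact Finset.measurable_sum _ fun u _ =>
      (((brwX_meas d Yv hmeas _).const_mul β).sub measurable_const).exp
  have hset : MeasurableSet {ω | brwW d Yv P β M ω < 1/2} :=
    measurableSet_lt hWmeas measurable_const
  set c : ℝ := φq - p * φβ with hc
  -- pointwise bound
  have key : ∀ ω, (∑ u : Fin M → Fin d, brwGibbs d Yv P β M (List.ofFn u) ω ^ p)
      ≤ Set.indicator {ω | brwW d Yv P β M ω < 1/2} (fun _ => (1:ℝ)) ω
        + (2:ℝ)^p * Real.exp (c * M) * brwW d Yv P q M ω := by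
    intro ω
    have hW := hWpos ω
    by_cases hw : brwW d Yv P β M ω < 1/2
    · rw [Set.indicator_of_mem (show ω ∈ {ω | brwW d Yv P β M ω < 1/2} from hw)]
      have h1 : ∀ u : Fin M → Fin d,
          brwGibbs d Yv P β M (List.ofFn u) ω ^ p ≤ brwGibbs d Yv P β M (List.ofFn u) ω := by
        intro u
        have hg0 : 0 ≤ brwGibbs d Yv P β M (List.ofFn u) ω := by
          rw [hGibbs]
          exact div_nonneg (Real.exp_pos _).le hW.le
        have hg1 : brwGibbs d Yv P β M (List.ofFn u) ω ≤ 1 := by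
          rw [hGibbs, div_le_one hW, brwW]
          exact Finset.single_le_sum (f := fun v : Fin M → Fin d =>
              Real.exp (β * brwX d Yv (List.ofFn v) ω - φβ * M))
            (fun _ _ => (Real.exp_pos _).le) (Finset.mem_univ u)
        calc brwGibbs d Yv P β M (List.ofFn u) ω ^ p
            ≤ brwGibbs d Yv P β M (List.ofFn u) ω ^ (1:ℝ) :=
              Real.rpow_le_rpow_of_exponent_ge' hg0 hg1 zero_le_one hp1.le
          _ = brwGibbs d Yv P β M (List.ofFn u) ω := Real.rpow_one _
      have h2 : ∑ u : Fin M → Fin d, brwGibbs d Yv P β M (List.ofFn u) ω = 1 := by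
        simp_rw [hGibbs]
        rw [← Finset.sum_div, div_eq_one_iff_eq hW.ne', brwW]
      calc ∑ u : Fin M → Fin d, brwGibbs d Yv P β M (List.ofFn u) ω ^ p
          ≤ ∑ u : Fin M → Fin d, brwGibbs d Yv P β M (List.ofFn u) ω :=
            Finset.sum_le_sum fun u _ => h1 u
        _ = 1 := h2
        _ ≤ 1 + (2:ℝ)^p * Real.exp (c * M) * brwW d Yv P q M ω :=
            le_add_of_nonneg_right (mul_nonneg
              (mul_nonneg (Real.rpow_nonneg (by norm_num) p) (Real.exp_pos _).le) (hWqnn ω))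
    · rw [Set.indicator_of_notMem (show ω ∉ {ω | brwW d Yv P β M ω < 1/2} from hw), zero_add]
      have hw' : (1:ℝ)/2 ≤ brwW d Yv P β M ω := not_lt.mp hw
      have h1 : ∀ u : Fin M → Fin d, brwGibbs d Yv P β M (List.ofFn u) ω ^ p
          ≤ (2:ℝ)^p * Real.exp (c * M)
            * Real.exp (q * brwX d Yv (List.ofFn u) ω - φq * M) := by
        intro u
        rw [hGibbs, Real.div_rpow (Real.exp_pos _).le hW.le]
        have hEp : Real.exp (β * brwX d Yv (List.ofFn u) ω - φβ * M) ^ p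
            = Real.exp (c * M) * Real.exp (q * brwX d Yv (List.ofFn u) ω - φq * M) := by
          rw [← Real.exp_mul, ← Real.exp_add]
          congr 1
          rw [hc, hq]
          ring
        rw [hEp]
        have hWp : ((1:ℝ)/2) ^ p ≤ brwW d Yv P β M ω ^ p :=
          Real.rpow_le_rpow (by norm_num) hw' hp0.le
        have hhalf : ((1:ℝ)/2) ^ p = ((2:ℝ)^p)⁻¹ := by
          rw [one_div, Real.inv_rpow (by norm_num : (0:ℝ) ≤ 2)]
        have step : Real.exp (c * M) * Real.exp (q * brwX d Yv (List.ofFn u) ω - φq * M)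
              / brwW d Yv P β M ω ^ p
            ≤ Real.exp (c * M) * Real.exp (q * brwX d Yv (List.ofFn u) ω - φq * M)
              / (((1:ℝ)/2) ^ p) :=
          div_le_div_of_nonneg_left (by positivity)
            (Real.rpow_pos_of_pos (by norm_num) p) hWp
        refine le_trans step (le_of_eq ?_)
        rw [hhalf, div_eq_mul_inv, inv_inv]
        ring
      calc ∑ u : Fin M → Fin d, brwGibbs d Yv P β M (List.ofFn u) ω ^ p
          ≤ ∑ u : Fin M → Fin d, (2:ℝ)^p * Real.exp (c * M)
              * Real.exp (q * brwX d Yv (List.ofFn u) ω - φq * M) :=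
            Finset.sum_le_sum fun u _ => h1 u
        _ = (2:ℝ)^p * Real.exp (c * M) * brwW d Yv P q M ω := by
            rw [← Finset.mul_sum, brwW]
  -- integrate
  have hG_int : Integrable (fun ω =>
      Set.indicator {ω | brwW d Yv P β M ω < 1/2} (fun _ => (1:ℝ)) ω
        + (2:ℝ)^p * Real.exp (c * M) * brwW d Yv P q M ω) P :=
    ((integrable_const (1:ℝ)).indicator hset).add (hWq_int.const_mul _)
  have hLnn : ∀ ω, 0 ≤ ∑ u : Fin M → Fin d, brwGibbs d Yv P β M (List.ofFn u) ω ^ p := by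
    intro ω
    refine Finset.sum_nonneg fun u _ => Real.rpow_nonneg ?_ p
    rw [hGibbs]
    exact div_nonneg (Real.exp_pos _).le (hWpos ω).le
  have hmono := integral_mono_of_nonneg (ae_of_all _ hLnn) hG_int (ae_of_all _ key)
  refine le_trans hmono ?_
  rw [integral_add ((integrable_const (1:ℝ)).indicator hset) (hWq_int.const_mul _),
    integral_const_mul, hEWq, mul_one, integral_indicator_const (1:ℝ) hset, smul_eq_mul, mul_one, measureReal_def]
end

section
/- Let β ∈ D(φ). For any integers M, N with 1 ≤ M ≤ N and any K with 0 ≤ K ≤ ⌊N/M⌋ − 1, the identity D(μ_{β,M,(K+1)M} ‖ μ_{β,N}) = D(μ_{β,M,KM} ‖ μ_{β,N}) + Σ_{|u|=KM} μ_{β,M,KM}(u) · D(μ^u_{β,M} ‖ μ^u_{β,N−KM}) holds pointwise on the underlying probability space, where for each j ≤ N the divergence D(μ_{β,M,j} ‖ μ_{β,N}) is taken over ∂T_j (with μ_{β,N} restricted to depth j), and D(μ^u_{β,M} ‖ μ^u_{β,N−KM}) is taken over ∂T_M (with μ^u_{β,N−KM} restricted to depth M). -/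
open MeasureTheory ProbabilityTheory Real Filter
open scoped ENNReal NNReal

section helpers

variable {Ω : Type*} [MeasurableSpace Ω]

lemma brwWsub_pos (d : ℕ) (hd : 0 < d) (Yv : List (Fin d) → Ω → Fin d → ℝ) (P : Measure Ω)
    (u : List (Fin d)) (β : ℝ) (n : ℕ) (ω : Ω) : 0 < brwWsub d Yv P u β n ω := by
  haveI : Nonempty (Fin d) := Fin.pos_iff_nonempty.mp hd
  exact Finset.sum_pos (fun w _ => Real.exp_pos _) Finset.univ_nonempty

lemma brwW_pos (d : ℕ) (hd : 0 < d) (Yv : List (Fin d) → Ω → Fin d → ℝ) (P : Measure Ω)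
    (β : ℝ) (n : ℕ) (ω : Ω) : 0 < brwW d Yv P β n ω := by
  haveI : Nonempty (Fin d) := Fin.pos_iff_nonempty.mp hd
  exact Finset.sum_pos (fun w _ => Real.exp_pos _) Finset.univ_nonempty

lemma brwWsub_zero (d : ℕ) (Yv : List (Fin d) → Ω → Fin d → ℝ) (P : Measure Ω)
    (u : List (Fin d)) (β : ℝ) (ω : Ω) : brwWsub d Yv P u β 0 ω = 1 := by
  simp [brwWsub]

lemma brwGibbsRel_pos (d : ℕ) (hd : 0 < d) (Yv : List (Fin d) → Ω → Fin d → ℝ) (P : Measure Ω)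
    (β : ℝ) (n : ℕ) (v u : List (Fin d)) (ω : Ω) : 0 < brwGibbsRel d Yv P β n v u ω :=
  div_pos (mul_pos (Real.exp_pos _) (brwWsub_pos d hd Yv P _ β _ ω))
    (brwWsub_pos d hd Yv P _ β _ ω)

lemma brwGibbs_pos (d : ℕ) (hd : 0 < d) (Yv : List (Fin d) → Ω → Fin d → ℝ) (P : Measure Ω)
    (β : ℝ) (n : ℕ) (u : List (Fin d)) (ω : Ω) : 0 < brwGibbs d Yv P β n u ω :=
  div_pos (mul_pos (Real.exp_pos _) (brwWsub_pos d hd Yv P _ β _ ω))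
    (brwW_pos d hd Yv P β _ ω)

lemma brwRen_pos (d : ℕ) (hd : 0 < d) (Yv : List (Fin d) → Ω → Fin d → ℝ) (P : Measure Ω)
    (β : ℝ) (M n : ℕ) (u : List (Fin d)) (ω : Ω) : 0 < brwRen d Yv P β M n u ω :=
  Finset.prod_pos fun _ _ => brwGibbsRel_pos d hd Yv P β _ _ _ ω

lemma brwGibbsRel_sum_one (d : ℕ) (hd : 0 < d) (Yv : List (Fin d) → Ω → Fin d → ℝ)
    (P : Measure Ω) (β : ℝ) (n : ℕ) (v : List (Fin d)) (ω : Ω) :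
    ∑ w : Fin n → Fin d, brwGibbsRel d Yv P β n v (List.ofFn w) ω = 1 := by
  have hpos := brwWsub_pos d hd Yv P v β n ω
  unfold brwGibbsRel
  simp only [List.length_ofFn, Nat.sub_self, brwWsub_zero, mul_one]
  rw [← Finset.sum_div]
  exact div_self (ne_of_gt hpos)

lemma chain_aux (a b c Sv Svw W : ℝ) (hSv : Sv ≠ 0) (hW : W ≠ 0) (h : a = b * c) :
    a * Svw / W = b * Sv / W * (c * Svw / Sv) := by
  subst h; field_simp

lemma brwGibbs_chain (d : ℕ) (hd : 0 < d) (Yv : List (Fin d) → Ω → Fin d → ℝ) (P : Measure Ω)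
    (β : ℝ) (N : ℕ) (v w : List (Fin d)) (ω : Ω) :
    brwGibbs d Yv P β N (v ++ w) ω
      = brwGibbs d Yv P β N v ω * brwGibbsRel d Yv P β (N - v.length) v w ω := by
  have h1 : brwWsub d Yv P v β (N - v.length) ω ≠ 0 :=
    ne_of_gt (brwWsub_pos d hd Yv P v β _ ω)
  have h2 : brwW d Yv P β N ω ≠ 0 := ne_of_gt (brwW_pos d hd Yv P β N ω)
  unfold brwGibbs brwGibbsRel
  rw [List.length_append,
    show N - v.length - w.length = N - (v.length + w.length) from by omega]
  exact chain_aux _ _ _ _ _ _ h1 h2 (by rw [← Real.exp_add]; congr 1; push_cast; ring)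

lemma brwRen_step (d : ℕ) (Yv : List (Fin d) → Ω → Fin d → ℝ) (P : Measure Ω)
    (β : ℝ) (M K : ℕ) (hM : 1 ≤ M) (v w : List (Fin d))
    (hv : v.length = K * M) (hw : w.length = M) (ω : Ω) :
    brwRen d Yv P β M ((K + 1) * M) (v ++ w) ω
      = brwRen d Yv P β M (K * M) v ω * brwGibbsRel d Yv P β M v w ω := by
  have hsucc : (K + 1) * M = K * M + M := by ring
  have hdiv : ∀ a : ℕ, (a * M + M - 1) / M = a := by
    intro a
    rw [show a * M + M - 1 = (M - 1) + a * M from by omega,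
      Nat.add_mul_div_right _ _ (show 0 < M by omega), Nat.div_eq_of_lt (by omega)]
    omega
  unfold brwRen
  have h1 : ((K + 1) * M + M - 1) / M = K + 1 := hdiv (K + 1)
  have h2 : (K * M + M - 1) / M = K := hdiv K
  rw [h1, h2, Finset.prod_range_succ]
  congr 1
  · refine Finset.prod_congr rfl fun J hJ => ?_
    rw [Finset.mem_range] at hJ
    have hJM : J * M + M ≤ K * M := by
      have := Nat.mul_le_mul_right M (show J + 1 ≤ K by omega)
      rw [add_mul, one_mul] at this
      omega
    have hmin1 : min M ((K + 1) * M - J * M) = M := by omega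
    have hmin2 : min M (K * M - J * M) = M := by omega
    have hlen : M ≤ (v.drop (J * M)).length := by
      rw [List.length_drop, hv]; omega
    rw [hmin1, hmin2, List.take_append_of_le_length (by omega),
      List.drop_append_of_le_length (by omega),
      List.take_append_of_le_length hlen]
  · have hmin : min M ((K + 1) * M - K * M) = M := by omega
    rw [hmin, List.take_left' hv, List.drop_left' hv, ← hw, List.take_length]

lemma sum_ofFn_split {d : ℕ} (n a b : ℕ) (h : n = a + b) (F : List (Fin d) → ℝ) :
    ∑ u : Fin n → Fin d, F (List.ofFn u)
      = ∑ v : Fin a → Fin d, ∑ w : Fin b → Fin d, F (List.ofFn v ++ List.ofFn w) := by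
  subst h
  calc ∑ u : Fin (a + b) → Fin d, F (List.ofFn u)
      = ∑ p : (Fin a → Fin d) × (Fin b → Fin d), F (List.ofFn p.1 ++ List.ofFn p.2) := by
        refine Fintype.sum_equiv
          ((Equiv.arrowCongr finSumFinEquiv (Equiv.refl (Fin d))).symm.trans
            (Equiv.sumArrowEquivProdArrow _ _ _)) _ _ fun u => ?_
        rw [List.ofFn_add]
        congr 1
    _ = _ := Fintype.sum_prod_type _

end helpers

/-- one-step decomposition of the KL divergence along the recursion. -/
theorem stmt_17
    {Ω : Type*} [MeasurableSpace Ω]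
    (d : ℕ) (hd : 2 ≤ d)
    (Yv : List (Fin d) → Ω → Fin d → ℝ)
    (P : Measure Ω) [IsProbabilityMeasure P]
    (hmeas : ∀ v, Measurable (Yv v))
    (hindep : iIndepFun Yv P)
    (hident : ∀ v, IdentDistrib (Yv v) (Yv []) P P)
    (β : ℝ) (hβ : β ∈ brwDom d Yv P)
    (M N : ℕ) (hM : 1 ≤ M) (hMN : M ≤ N)
    (K : ℕ) (hK : K + 1 ≤ N / M) :
    ∀ ω : Ω,
      brwKL d ((K + 1) * M) (fun u => brwRen d Yv P β M ((K + 1) * M) u ω)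
          (fun u => brwGibbs d Yv P β N u ω)
      = brwKL d (K * M) (fun u => brwRen d Yv P β M (K * M) u ω)
          (fun u => brwGibbs d Yv P β N u ω)
        + ∑ u : Fin (K * M) → Fin d,
            brwRen d Yv P β M (K * M) (List.ofFn u) ω *
              brwKL d M (fun w => brwGibbsRel d Yv P β M (List.ofFn u) w ω)
                (fun w => brwGibbsRel d Yv P β (N - K * M) (List.ofFn u) w ω) := by
  intro ω
  have hd0 : 0 < d := by omega
  have hKMN : K * M + M ≤ N := by
    have h1 : (K + 1) * M ≤ N / M * M := Nat.mul_le_mul_right M hK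
    have h2 : N / M * M ≤ N := Nat.div_mul_le_self N M
    have h3 : (K + 1) * M = K * M + M := by ring
    omega
  have hstep : ∀ (v : Fin (K * M) → Fin d) (w : Fin M → Fin d),
      brwRen d Yv P β M ((K + 1) * M) (List.ofFn v ++ List.ofFn w) ω
        = brwRen d Yv P β M (K * M) (List.ofFn v) ω *
            brwGibbsRel d Yv P β M (List.ofFn v) (List.ofFn w) ω :=
    fun v w => brwRen_step d Yv P β M K hM _ _ (by simp) (by simp) ω
  have hchain : ∀ (v : Fin (K * M) → Fin d) (w : Fin M → Fin d),
      brwGibbs d Yv P β N (List.ofFn v ++ List.ofFn w) ω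
        = brwGibbs d Yv P β N (List.ofFn v) ω *
            brwGibbsRel d Yv P β (N - K * M) (List.ofFn v) (List.ofFn w) ω := by
    intro v w
    have h := brwGibbs_chain d hd0 Yv P β N (List.ofFn v) (List.ofFn w) ω
    simpa using h
  have hL : brwKL d ((K + 1) * M) (fun u => brwRen d Yv P β M ((K + 1) * M) u ω)
        (fun u => brwGibbs d Yv P β N u ω)
      = ∑ v : Fin (K * M) → Fin d, ∑ w : Fin M → Fin d,
          brwRen d Yv P β M (K * M) (List.ofFn v) ω *
              brwGibbsRel d Yv P β M (List.ofFn v) (List.ofFn w) ω *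
            Real.log (brwRen d Yv P β M (K * M) (List.ofFn v) ω *
                brwGibbsRel d Yv P β M (List.ofFn v) (List.ofFn w) ω /
              (brwGibbs d Yv P β N (List.ofFn v) ω *
                brwGibbsRel d Yv P β (N - K * M) (List.ofFn v) (List.ofFn w) ω)) := by
    have := sum_ofFn_split ((K + 1) * M) (K * M) M (by ring)
      (fun l => brwRen d Yv P β M ((K + 1) * M) l ω *
        Real.log (brwRen d Yv P β M ((K + 1) * M) l ω / brwGibbs d Yv P β N l ω))
    refine this.trans ?_
    refine Finset.sum_congr rfl fun v _ => Finset.sum_congr rfl fun w _ => ?_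
    rw [hstep, hchain]
  rw [hL]
  have hinner : ∀ v : Fin (K * M) → Fin d,
      (∑ w : Fin M → Fin d,
        brwRen d Yv P β M (K * M) (List.ofFn v) ω *
            brwGibbsRel d Yv P β M (List.ofFn v) (List.ofFn w) ω *
          Real.log (brwRen d Yv P β M (K * M) (List.ofFn v) ω *
              brwGibbsRel d Yv P β M (List.ofFn v) (List.ofFn w) ω /
            (brwGibbs d Yv P β N (List.ofFn v) ω *
              brwGibbsRel d Yv P β (N - K * M) (List.ofFn v) (List.ofFn w) ω)))
      = brwRen d Yv P β M (K * M) (List.ofFn v) ω *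
          Real.log (brwRen d Yv P β M (K * M) (List.ofFn v) ω /
            brwGibbs d Yv P β N (List.ofFn v) ω)
        + brwRen d Yv P β M (K * M) (List.ofFn v) ω *
            brwKL d M (fun w => brwGibbsRel d Yv P β M (List.ofFn v) w ω)
              (fun w => brwGibbsRel d Yv P β (N - K * M) (List.ofFn v) w ω) := by
    intro v
    have hP : 0 < brwRen d Yv P β M (K * M) (List.ofFn v) ω :=
      brwRen_pos d hd0 Yv P β M _ _ ω
    have hQ : 0 < brwGibbs d Yv P β N (List.ofFn v) ω :=
      brwGibbs_pos d hd0 Yv P β N _ ω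
    have step : ∀ w : Fin M → Fin d,
        brwRen d Yv P β M (K * M) (List.ofFn v) ω *
            brwGibbsRel d Yv P β M (List.ofFn v) (List.ofFn w) ω *
          Real.log (brwRen d Yv P β M (K * M) (List.ofFn v) ω *
              brwGibbsRel d Yv P β M (List.ofFn v) (List.ofFn w) ω /
            (brwGibbs d Yv P β N (List.ofFn v) ω *
              brwGibbsRel d Yv P β (N - K * M) (List.ofFn v) (List.ofFn w) ω))
        = brwRen d Yv P β M (K * M) (List.ofFn v) ω *
              Real.log (brwRen d Yv P β M (K * M) (List.ofFn v) ω /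
                brwGibbs d Yv P β N (List.ofFn v) ω) *
            brwGibbsRel d Yv P β M (List.ofFn v) (List.ofFn w) ω
          + brwRen d Yv P β M (K * M) (List.ofFn v) ω *
              (brwGibbsRel d Yv P β M (List.ofFn v) (List.ofFn w) ω *
                Real.log (brwGibbsRel d Yv P β M (List.ofFn v) (List.ofFn w) ω /
                  brwGibbsRel d Yv P β (N - K * M) (List.ofFn v) (List.ofFn w) ω)) := by
      intro w
      have hp : 0 < brwGibbsRel d Yv P β M (List.ofFn v) (List.ofFn w) ω :=
        brwGibbsRel_pos d hd0 Yv P β M _ _ ω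
      have hq : 0 < brwGibbsRel d Yv P β (N - K * M) (List.ofFn v) (List.ofFn w) ω :=
        brwGibbsRel_pos d hd0 Yv P β (N - K * M) _ _ ω
      rw [show
          brwRen d Yv P β M (K * M) (List.ofFn v) ω *
              brwGibbsRel d Yv P β M (List.ofFn v) (List.ofFn w) ω /
            (brwGibbs d Yv P β N (List.ofFn v) ω *
              brwGibbsRel d Yv P β (N - K * M) (List.ofFn v) (List.ofFn w) ω)
          = brwRen d Yv P β M (K * M) (List.ofFn v) ω / brwGibbs d Yv P β N (List.ofFn v) ω *
            (brwGibbsRel d Yv P β M (List.ofFn v) (List.ofFn w) ω /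
              brwGibbsRel d Yv P β (N - K * M) (List.ofFn v) (List.ofFn w) ω)
          from (div_mul_div_comm _ _ _ _).symm,
        Real.log_mul (ne_of_gt (div_pos hP hQ)) (ne_of_gt (div_pos hp hq))]
      ring
    rw [Finset.sum_congr rfl fun w _ => step w, Finset.sum_add_distrib,
      ← Finset.mul_sum, ← Finset.mul_sum,
      brwGibbsRel_sum_one d hd0 Yv P β M (List.ofFn v) ω, mul_one]
    rfl
  rw [Finset.sum_congr rfl fun v _ => hinner v, Finset.sum_add_distrib]
  rfl
end
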